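/- Let ρ₁, ρ₂ be qubit states with Bloch vectors r₁, r₂ ∈ ℝ³ (ρ_k = ½(I + r_k·σ)). Then for α ∈ [0,1], the Bloch vector of ρ₁ ⊞_α ρ₂ = α ρ₁ + (1−α) ρ₂ − √(α(1−α)) i[ρ₁,ρ₂] is α r₁ + (1−α) r₂ + √(α(1−α)) (r₁ × r₂), where × is the cross product. -/
import Mathlib


/-- The partial swap addition rule `ρ ⊞_α σ`. -/
noncomputable def boxplus (α : ℝ) (ρ σ : Matrix (Fin 2) (Fin 2) ℂ) :
    Matrix (Fin 2) (Fin 2) ℂ :=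
  (α : ℂ) • ρ + ((1 - α : ℝ) : ℂ) • σ
    - ((Real.sqrt (α * (1 - α)) : ℂ) * Complex.I) • (ρ * σ - σ * ρ)

/-- Pauli matrix `σ_x`. -/
def pauliX : Matrix (Fin 2) (Fin 2) ℂ := !![0, 1; 1, 0]

/-- Pauli matrix `σ_y`. -/
def pauliY : Matrix (Fin 2) (Fin 2) ℂ := !![0, -Complex.I; Complex.I, 0]

/-- Pauli matrix `σ_z`. -/
def pauliZ : Matrix (Fin 2) (Fin 2) ℂ := !![1, 0; 0, -1]

/-- The qubit state with Bloch vector `r`, namely `½(I + r·σ)`. -/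
noncomputable def blochState (r : Fin 3 → ℝ) : Matrix (Fin 2) (Fin 2) ℂ :=
  ((2 : ℂ)⁻¹) • ((1 : Matrix (Fin 2) (Fin 2) ℂ)
    + (r 0 : ℂ) • pauliX + (r 1 : ℂ) • pauliY + (r 2 : ℂ) • pauliZ)

set_option maxHeartbeats 2000000 in
theorem stmt_17 (α : ℝ) (hα : α ∈ Set.Icc (0:ℝ) 1) (r₁ r₂ : Fin 3 → ℝ)
    (hr₁ : Real.sqrt (∑ i, r₁ i ^ 2) ≤ 1) (hr₂ : Real.sqrt (∑ i, r₂ i ^ 2) ≤ 1) :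
    boxplus α (blochState r₁) (blochState r₂)
      = blochState (α • r₁ + (1 - α) • r₂
          + Real.sqrt (α * (1 - α)) • (crossProduct r₁ r₂)) := by
  ext i j
  fin_cases i <;> fin_cases j <;>
    simp [boxplus, blochState, pauliX, pauliY, pauliZ, crossProduct,
      Matrix.mul_apply, Fin.sum_univ_succ, Matrix.one_apply, Complex.ext_iff] <;>
    push_cast <;> ring_nf <;> tauto
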